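/- arXiv:2307.00525 — 3 statements merged into one kernel-verified Lean document; each statement's English description precedes it below -/
import Mathlib

section
/- The eigenvalues of the preconditioned matrix A·Q₂⁻¹ belong to the set {1, −1, i, −i}. -/
/-!
Write `Z := 𝒜 Q₂⁻¹`. Since `Q₂` is block upper triangular, one reads off
`Z = (1, 0, 0; B A⁻¹, -1, -2 Cᵀ X⁻¹; 0, C S⁻¹, 1)`, and `Y := Cᵀ X⁻¹` is a right inverse of
`C S⁻¹` because `X = C S⁻¹ Cᵀ`. Then `Z² = (1, 0, 0; 0, 1 - 2 Y C S⁻¹, 0; *, 0, -1)`, whose middle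
block is a reflection (`Y C S⁻¹` is idempotent), so `Z⁴ = 1` and every eigenvalue is a fourth
root of unity.
-/

open Matrix Complex

/-- A 3×3 block matrix with blocks of sizes n, m, l. -/
def blk3 {n m l : ℕ}
    (M11 : Matrix (Fin n) (Fin n) ℝ) (M12 : Matrix (Fin n) (Fin m) ℝ) (M13 : Matrix (Fin n) (Fin l) ℝ)
    (M21 : Matrix (Fin m) (Fin n) ℝ) (M22 : Matrix (Fin m) (Fin m) ℝ) (M23 : Matrix (Fin m) (Fin l) ℝ)
    (M31 : Matrix (Fin l) (Fin n) ℝ) (M32 : Matrix (Fin l) (Fin m) ℝ) (M33 : Matrix (Fin l) (Fin l) ℝ) :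
    Matrix (Fin n ⊕ (Fin m ⊕ Fin l)) (Fin n ⊕ (Fin m ⊕ Fin l)) ℝ :=
  Matrix.fromBlocks M11
    (Matrix.of fun i j => Sum.elim (M12 i) (M13 i) j)
    (Matrix.of fun i j => Sum.elim (fun k => M21 k j) (fun k => M31 k j) i)
    (Matrix.fromBlocks M22 M23 M32 M33)

section Blk3
variable {n m l : ℕ}

lemma blk3_mul
    (A11 : Matrix (Fin n) (Fin n) ℝ) (A12 : Matrix (Fin n) (Fin m) ℝ) (A13 : Matrix (Fin n) (Fin l) ℝ)
    (A21 : Matrix (Fin m) (Fin n) ℝ) (A22 : Matrix (Fin m) (Fin m) ℝ) (A23 : Matrix (Fin m) (Fin l) ℝ)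
    (A31 : Matrix (Fin l) (Fin n) ℝ) (A32 : Matrix (Fin l) (Fin m) ℝ) (A33 : Matrix (Fin l) (Fin l) ℝ)
    (B11 : Matrix (Fin n) (Fin n) ℝ) (B12 : Matrix (Fin n) (Fin m) ℝ) (B13 : Matrix (Fin n) (Fin l) ℝ)
    (B21 : Matrix (Fin m) (Fin n) ℝ) (B22 : Matrix (Fin m) (Fin m) ℝ) (B23 : Matrix (Fin m) (Fin l) ℝ)
    (B31 : Matrix (Fin l) (Fin n) ℝ) (B32 : Matrix (Fin l) (Fin m) ℝ) (B33 : Matrix (Fin l) (Fin l) ℝ) :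
    blk3 A11 A12 A13 A21 A22 A23 A31 A32 A33 * blk3 B11 B12 B13 B21 B22 B23 B31 B32 B33 =
      blk3 (A11 * B11 + A12 * B21 + A13 * B31) (A11 * B12 + A12 * B22 + A13 * B32)
        (A11 * B13 + A12 * B23 + A13 * B33)
        (A21 * B11 + A22 * B21 + A23 * B31) (A21 * B12 + A22 * B22 + A23 * B32)
        (A21 * B13 + A22 * B23 + A23 * B33)
        (A31 * B11 + A32 * B21 + A33 * B31) (A31 * B12 + A32 * B22 + A33 * B32)
        (A31 * B13 + A32 * B23 + A33 * B33) := by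
  ext (i | i | i) (j | j | j) <;>
    simp [blk3, Matrix.mul_apply, Fintype.sum_sum_type, add_assoc]

lemma blk3_one :
    blk3 (1 : Matrix (Fin n) (Fin n) ℝ) 0 0 0 (1 : Matrix (Fin m) (Fin m) ℝ) 0 0 0
      (1 : Matrix (Fin l) (Fin l) ℝ) = 1 := by
  ext (i | i | i) (j | j | j) <;> simp [blk3, Matrix.one_apply]

lemma det_blk3_of_lower_eq_zero
    (M11 : Matrix (Fin n) (Fin n) ℝ) (M12 : Matrix (Fin n) (Fin m) ℝ) (M13 : Matrix (Fin n) (Fin l) ℝ)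
    (M22 : Matrix (Fin m) (Fin m) ℝ) (M23 : Matrix (Fin m) (Fin l) ℝ) (M33 : Matrix (Fin l) (Fin l) ℝ) :
    (blk3 M11 M12 M13 0 M22 M23 0 0 M33).det = M11.det * (M22.det * M33.det) := by
  have hlower : (Matrix.of fun i j => Sum.elim (fun k => (0 : Matrix (Fin m) (Fin n) ℝ) k j)
      (fun k => (0 : Matrix (Fin l) (Fin n) ℝ) k j) i) = 0 := by
    ext (i | i) j <;> rfl
  rw [blk3, hlower, det_fromBlocks_zero₂₁, det_fromBlocks_zero₂₁]

lemma blk3_pow_four_eq_one {P : Matrix (Fin m) (Fin n) ℝ} {Q : Matrix (Fin l) (Fin m) ℝ}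
    {Y : Matrix (Fin m) (Fin l) ℝ} (hQY : Q * Y = 1) :
    blk3 1 0 0 P (-1) ((-2 : ℝ) • Y) 0 Q 1 ^ 4 = 1 := by
  have hidem : Y * Q * (Y * Q) = Y * Q := by
    rw [Matrix.mul_assoc, ← Matrix.mul_assoc Q, hQY, Matrix.one_mul]
  have hsq : blk3 1 0 0 P (-1) ((-2 : ℝ) • Y) 0 Q 1 ^ 2 =
      blk3 1 0 0 0 (1 - (2 : ℝ) • (Y * Q)) 0 (Q * P) 0 (-1) := by
    rw [sq, blk3_mul]
    congr 1 <;> simp [hQY, Matrix.smul_mul, Matrix.mul_smul] <;> module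
  rw [show 4 = 2 * 2 from rfl, pow_mul, hsq, sq, blk3_mul, ← blk3_one]
  have hrefl : (1 - (2 : ℝ) • (Y * Q)) * (1 - (2 : ℝ) • (Y * Q)) = 1 := by
    simp only [Matrix.sub_mul, Matrix.mul_sub, Matrix.smul_mul, Matrix.mul_smul, hidem,
      Matrix.one_mul, Matrix.mul_one]
    module
  congr 1 <;> simp [hrefl]

lemma blk3_saddle_eq_mul {A : Matrix (Fin n) (Fin n) ℝ} {B : Matrix (Fin m) (Fin n) ℝ}
    {C : Matrix (Fin l) (Fin m) ℝ} {S : Matrix (Fin m) (Fin m) ℝ} {X : Matrix (Fin l) (Fin l) ℝ}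
    (hA : IsUnit A.det) (hS : S = B * A⁻¹ * Bᵀ) (hS' : IsUnit S.det) (hX : X = C * S⁻¹ * Cᵀ)
    (hX' : IsUnit X.det) :
    blk3 A Bᵀ 0 B 0 Cᵀ 0 C 0 =
      blk3 1 0 0 (B * A⁻¹) (-1) ((-2 : ℝ) • (Cᵀ * X⁻¹)) 0 (C * S⁻¹) 1 *
        blk3 A Bᵀ 0 0 S Cᵀ 0 0 (-X) := by
  have hBAB : B * (A⁻¹ * Bᵀ) = S := by rw [hS, Matrix.mul_assoc]
  have hCSC : C * (S⁻¹ * Cᵀ) = X := by rw [hX, Matrix.mul_assoc]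
  rw [blk3_mul]
  congr 1 <;> simp [Matrix.mul_assoc, Matrix.smul_mul, nonsing_inv_mul _ hA, nonsing_inv_mul _ hS',
    nonsing_inv_mul _ hX', hBAB, hCSC]
  module

end Blk3

lemma Matrix.PosDef.mul_mul_transpose_of_rank_eq {m n : ℕ} {M : Matrix (Fin n) (Fin n) ℝ}
    (hM : M.PosDef) {B : Matrix (Fin m) (Fin n) ℝ} (hB : B.rank = m) : (B * M * Bᵀ).PosDef := by
  have hinj : Function.Injective B.vecMul := by
    rw [Matrix.vecMul_injective_iff, linearIndependent_iff_card_eq_finrank_span]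
    rw [Matrix.rank_eq_finrank_span_row] at hB
    simpa [Set.finrank] using hB.symm
  simpa [conjTranspose_eq_transpose_of_trivial] using hM.mul_mul_conjTranspose_same hinj

lemma spectrum.pow_eq_one_of_pow_eq_one {𝕜 A : Type*} [Field 𝕜] [Ring A] [Algebra 𝕜 A] {a : A}
    {k : ℕ} (ha : a ^ k = 1) {μ : 𝕜} (hμ : μ ∈ spectrum 𝕜 a) : μ ^ k = 1 := by
  cases subsingleton_or_nontrivial A
  · simp [spectrum.of_subsingleton] at hμ
  · simpa [ha, spectrum.one_eq] using spectrum.pow_mem_pow a k hμ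

lemma Complex.eq_one_or_neg_one_or_I_or_neg_I_of_pow_four_eq_one {μ : ℂ} (hμ : μ ^ 4 = 1) :
    μ = 1 ∨ μ = -1 ∨ μ = I ∨ μ = -I := by
  have : (μ - 1) * (μ + 1) * (μ - I) * (μ + I) = 0 := by
    linear_combination hμ + (1 - μ ^ 2) * I_sq
  simpa [mul_eq_zero, sub_eq_zero, add_eq_zero_iff_eq_neg, or_assoc] using this

theorem stmt2 {n m l : ℕ} (A : Matrix (Fin n) (Fin n) ℝ) (B : Matrix (Fin m) (Fin n) ℝ)
    (C : Matrix (Fin l) (Fin m) ℝ) (hA : A.PosDef) (hB : B.rank = m) (hC : C.rank = l)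
    (S : Matrix (Fin m) (Fin m) ℝ) (hS : S = B * A⁻¹ * Bᵀ)
    (X : Matrix (Fin l) (Fin l) ℝ) (hX : X = C * S⁻¹ * Cᵀ)
    (𝒜 Q₂ : Matrix (Fin n ⊕ (Fin m ⊕ Fin l)) (Fin n ⊕ (Fin m ⊕ Fin l)) ℝ)
    (h𝒜 : 𝒜 = blk3 A Bᵀ 0 B 0 Cᵀ 0 C 0)
    (hQ : Q₂ = blk3 A Bᵀ 0 0 S Cᵀ 0 0 (-X)) :
    ∀ μ ∈ spectrum ℂ ((𝒜 * Q₂⁻¹).map Complex.ofReal),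
      μ = 1 ∨ μ = -1 ∨ μ = Complex.I ∨ μ = -Complex.I := by
  intro μ hμ
  have hS_pos : S.PosDef := hS ▸ hA.inv.mul_mul_transpose_of_rank_eq hB
  have hX_pos : X.PosDef := hX ▸ hS_pos.inv.mul_mul_transpose_of_rank_eq hC
  have hA_det := (isUnit_iff_isUnit_det A).mp hA.isUnit
  have hS_det := (isUnit_iff_isUnit_det S).mp hS_pos.isUnit
  have hX_det := (isUnit_iff_isUnit_det X).mp hX_pos.isUnit
  have hQ_det : IsUnit Q₂.det := by
    rw [hQ, det_blk3_of_lower_eq_zero, det_neg]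
    exact hA_det.mul (hS_det.mul ((isUnit_neg_one.pow _).mul hX_det))
  have hCY : C * S⁻¹ * (Cᵀ * X⁻¹) = 1 := by
    rw [← Matrix.mul_assoc, ← hX, mul_nonsing_inv _ hX_det]
  have hpow : (𝒜 * Q₂⁻¹) ^ 4 = 1 := by
    rw [h𝒜, blk3_saddle_eq_mul hA_det hS hS_det hX hX_det, ← hQ,
      mul_nonsing_inv_cancel_right _ _ hQ_det]
    exact blk3_pow_four_eq_one hCY
  refine Complex.eq_one_or_neg_one_or_I_or_neg_I_of_pow_four_eq_one
    (spectrum.pow_eq_one_of_pow_eq_one ?_ hμ)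
  rw [show (Complex.ofReal : ℝ → ℂ) = Complex.ofRealHom from rfl, ← Matrix.map_pow, hpow,
    Matrix.map_one _ (map_zero _) (map_one _)]
end

section
/- λ = −1 is an eigenvalue of A·Q₂⁻¹ with eigenvector of the form (0; x₂; 0) if and only if x₂ is a nonzero vector in the kernel of C S⁻¹. -/
/-!
The matrices `S` and `X` are positive definite, being congruences of the positive definite `A⁻¹`
and `S⁻¹` by matrices of full row rank. Hence `Q₂` is block upper triangular with invertible
diagonal blocks `A`, `S`, `-X`, and back substitution gives `Q₂⁻¹ (0; x₂; 0) = (-A⁻¹Bᵀy; y; 0)`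
with `y = S⁻¹x₂`. Applying `𝒜` to this vector yields `(0; -x₂; CS⁻¹x₂)`, which equals
`-(0; x₂; 0)` exactly when `CS⁻¹x₂ = 0`.
-/

open Matrix Complex

theorem Matrix.vecMul_injective_of_rank_eq_card {m n K : Type*} [Fintype m] [Fintype n] [Field K]
    {B : Matrix m n K} (hB : B.rank = Fintype.card m) : Function.Injective B.vecMul :=
  vecMul_injective_iff.2 <| linearIndependent_iff_card_eq_finrank_span.2 <| by
    rw [Set.finrank, ← rank_eq_finrank_span_row, hB]

theorem Matrix.PosDef.mul_mul_transpose_of_rank_eq_card {m n : Type*} [Fintype m] [Fintype n]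
    {A : Matrix n n ℝ} (hA : A.PosDef) {B : Matrix m n ℝ} (hB : B.rank = Fintype.card m) :
    (B * A * Bᵀ).PosDef := by
  simpa using hA.mul_mul_conjTranspose_same (vecMul_injective_of_rank_eq_card hB)

theorem Sum.elim_eq_zero_iff {α β γ : Type*} [Zero γ] {f : α → γ} {g : β → γ} :
    Sum.elim f g = 0 ↔ f = 0 ∧ g = 0 := by
  rw [← Sum.elim_zero_zero, Sum.elim_eq_iff]

theorem blk3_mulVec_sumElim {n m l : ℕ}
    (M11 : Matrix (Fin n) (Fin n) ℝ) (M12 : Matrix (Fin n) (Fin m) ℝ) (M13 : Matrix (Fin n) (Fin l) ℝ)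
    (M21 : Matrix (Fin m) (Fin n) ℝ) (M22 : Matrix (Fin m) (Fin m) ℝ) (M23 : Matrix (Fin m) (Fin l) ℝ)
    (M31 : Matrix (Fin l) (Fin n) ℝ) (M32 : Matrix (Fin l) (Fin m) ℝ) (M33 : Matrix (Fin l) (Fin l) ℝ)
    (u : Fin n → ℝ) (v : Fin m → ℝ) (w : Fin l → ℝ) :
    blk3 M11 M12 M13 M21 M22 M23 M31 M32 M33 *ᵥ Sum.elim u (Sum.elim v w) =
      Sum.elim (M11 *ᵥ u + M12 *ᵥ v + M13 *ᵥ w)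
        (Sum.elim (M21 *ᵥ u + M22 *ᵥ v + M23 *ᵥ w) (M31 *ᵥ u + M32 *ᵥ v + M33 *ᵥ w)) := by
  ext (i | i | i) <;> simp [blk3, mulVec, dotProduct, Fintype.sum_sum_type] <;> ring

theorem det_blk3_of_lower_zero {n m l : ℕ}
    (M11 : Matrix (Fin n) (Fin n) ℝ) (M12 : Matrix (Fin n) (Fin m) ℝ) (M13 : Matrix (Fin n) (Fin l) ℝ)
    (M22 : Matrix (Fin m) (Fin m) ℝ) (M23 : Matrix (Fin m) (Fin l) ℝ) (M33 : Matrix (Fin l) (Fin l) ℝ) :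
    (blk3 M11 M12 M13 0 M22 M23 0 0 M33).det = M11.det * (M22.det * M33.det) := by
  have : (Matrix.of fun i j => Sum.elim (fun k => (0 : Matrix (Fin m) (Fin n) ℝ) k j)
      (fun k => (0 : Matrix (Fin l) (Fin n) ℝ) k j) i) = 0 := by
    ext (i | i) j <;> rfl
  rw [blk3, this, det_fromBlocks_zero₂₁, det_fromBlocks_zero₂₁]

theorem stmt4 {n m l : ℕ} (A : Matrix (Fin n) (Fin n) ℝ) (B : Matrix (Fin m) (Fin n) ℝ)
    (C : Matrix (Fin l) (Fin m) ℝ) (hA : A.PosDef) (hB : B.rank = m) (hC : C.rank = l)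
    (S : Matrix (Fin m) (Fin m) ℝ) (hS : S = B * A⁻¹ * Bᵀ)
    (X : Matrix (Fin l) (Fin l) ℝ) (hX : X = C * S⁻¹ * Cᵀ)
    (𝒜 Q₂ : Matrix (Fin n ⊕ (Fin m ⊕ Fin l)) (Fin n ⊕ (Fin m ⊕ Fin l)) ℝ)
    (h𝒜 : 𝒜 = blk3 A Bᵀ 0 B 0 Cᵀ 0 C 0)
    (hQ : Q₂ = blk3 A Bᵀ 0 0 S Cᵀ 0 0 (-X))
    (x₂ : Fin m → ℝ) :
    (Sum.elim (0 : Fin n → ℝ) (Sum.elim x₂ (0 : Fin l → ℝ)) ≠ 0 ∧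
      (𝒜 * Q₂⁻¹) *ᵥ Sum.elim (0 : Fin n → ℝ) (Sum.elim x₂ (0 : Fin l → ℝ)) =
        (-1 : ℝ) • Sum.elim (0 : Fin n → ℝ) (Sum.elim x₂ (0 : Fin l → ℝ)))
    ↔ (x₂ ≠ 0 ∧ (C * S⁻¹) *ᵥ x₂ = 0) := by
  have hS_pos : S.PosDef := hS ▸ hA.inv.mul_mul_transpose_of_rank_eq_card (by simpa using hB)
  have hX_pos : X.PosDef := hX ▸ hS_pos.inv.mul_mul_transpose_of_rank_eq_card (by simpa using hC)
  have hA_det := (isUnit_iff_isUnit_det A).1 hA.isUnit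
  have hS_det := (isUnit_iff_isUnit_det S).1 hS_pos.isUnit
  have hQ_det : IsUnit Q₂.det := by
    rw [hQ, det_blk3_of_lower_zero, det_neg]
    have hX_det := (isUnit_iff_isUnit_det X).1 hX_pos.isUnit
    exact hA_det.mul (hS_det.mul ((isUnit_one.neg.pow _).mul hX_det))
  set y := S⁻¹ *ᵥ x₂ with hy
  have hSy : S *ᵥ y = x₂ := by rw [hy, mulVec_mulVec, mul_nonsing_inv _ hS_det, one_mulVec]
  set u := A⁻¹ *ᵥ Bᵀ *ᵥ y with hu
  have hAu : A *ᵥ u = Bᵀ *ᵥ y := by rw [hu, mulVec_mulVec, mul_nonsing_inv _ hA_det, one_mulVec]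
  have hBu : B *ᵥ u = x₂ := by rw [hu, mulVec_mulVec, mulVec_mulVec, ← hS, hSy]
  have hQw : Q₂ *ᵥ Sum.elim (-u) (Sum.elim y 0) =
      Sum.elim (0 : Fin n → ℝ) (Sum.elim x₂ 0) := by
    simp [hQ, blk3_mulVec_sumElim, mulVec_neg, hAu, hSy]
  have h𝒜w : 𝒜 *ᵥ Sum.elim (-u) (Sum.elim y 0) =
      Sum.elim (0 : Fin n → ℝ) (Sum.elim (-x₂) (C *ᵥ y)) := by
    simp [h𝒜, blk3_mulVec_sumElim, mulVec_neg, hAu, hBu]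
  have hQ_inv : Q₂⁻¹ *ᵥ Sum.elim (0 : Fin n → ℝ) (Sum.elim x₂ 0) =
      Sum.elim (-u) (Sum.elim y 0) := by
    rw [← hQw, mulVec_mulVec, nonsing_inv_mul _ hQ_det, one_mulVec]
  rw [← mulVec_mulVec, hQ_inv, h𝒜w, hy, mulVec_mulVec]
  simp [Sum.elim_eq_zero_iff, ← Sum.elim_neg_neg, Sum.elim_eq_iff]
end

section
/- The eigenvalues of the preconditioned matrices A·Q₃⁻¹ and Q₄⁻¹·A are contained in {1, −1}. In particular, A·Q₃⁻¹ equals the block lower-triangular matrix (I, 0, 0; B A⁻¹, I, 0; 0, −C S⁻¹, −I) and Q₄⁻¹ 𝒜 equals the block upper-triangular matrix (I, 0, A⁻¹ Bᵀ S⁻¹ Cᵀ; 0, I, −S⁻¹ Cᵀ; 0, 0, −I). -/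
/-!
Both preconditioners factor the saddle-point matrix: `𝒜 = L * Q₃` and `𝒜 = Q₄ * U`, where `L` and
`U` are the block-triangular matrices of the statement. Full row rank of `B` and `C` makes the Schur
complements `S` and `X` positive definite, so the block-triangular `Q₃` is invertible, and then so is
`Q₄`, because `det Q₄ * det U = det L * det Q₃` with `det L, det U = ±1`. Hence `𝒜 Q₃⁻¹ = L` and
`Q₄⁻¹ 𝒜 = U`. Block-triangular matrices with diagonal blocks `I, I, -I` have characteristic
polynomial `(t - 1)^(n + m) (t + 1)^l`, so their only eigenvalues are `±1`.
-/

open Matrix Complex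

namespace Matrix

section Rank

variable {K : Type*} [Field K] {ι κ : Type*} [Fintype ι] [Fintype κ]

lemma vecMul_injective_of_rank_eq_card_s6 {B : Matrix ι κ K} (hB : B.rank = Fintype.card ι) :
    Function.Injective B.vecMul := by
  rw [vecMul_injective_iff, linearIndependent_iff_card_eq_finrank_span, ← hB,
    rank_eq_finrank_span_row, Set.finrank]

lemma PosDef.mul_mul_transpose_of_rank_eq_card_s6 {M : Matrix κ κ ℝ} (hM : M.PosDef)
    {B : Matrix ι κ ℝ} (hB : B.rank = Fintype.card ι) : (B * M * Bᵀ).PosDef := by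
  simpa using hM.mul_mul_conjTranspose_same (vecMul_injective_of_rank_eq_card_s6 hB)

end Rank

open Polynomial in
lemma charpoly_neg_one {R ι : Type*} [CommRing R] [Fintype ι] [DecidableEq ι] :
    charpoly (-1 : Matrix ι ι R) = (X + 1) ^ Fintype.card ι := by
  rw [← diagonal_one, diagonal_neg, charpoly_diagonal]
  simp [sub_eq_add_neg]

open Polynomial in
lemma eq_one_or_eq_neg_one_of_mem_spectrum_map {R K ι : Type*} [CommRing R] [Field K]
    [Fintype ι] [DecidableEq ι] (f : R →+* K) {M : Matrix ι ι R} {a b : ℕ}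
    (hM : M.charpoly = (X - 1) ^ a * (X + 1) ^ b) {μ : K}
    (hμ : μ ∈ spectrum K (M.map f)) : μ = 1 ∨ μ = -1 := by
  rw [mem_spectrum_iff_isRoot_charpoly, charpoly_map, hM] at hμ
  simp only [Polynomial.map_mul, Polynomial.map_pow, Polynomial.map_sub, Polynomial.map_add,
    Polynomial.map_X, Polynomial.map_one, IsRoot.def, eval_mul, eval_pow, eval_sub, eval_add,
    eval_X, eval_one, mul_eq_zero, pow_eq_zero_iff', sub_eq_zero, add_eq_zero_iff_eq_neg] at hμ
  tauto

end Matrix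

section Blocks

variable {n m l : ℕ}

lemma blk3_eq_fromBlocks (M11 : Matrix (Fin n) (Fin n) ℝ) (M12 : Matrix (Fin n) (Fin m) ℝ)
    (M13 : Matrix (Fin n) (Fin l) ℝ) (M21 : Matrix (Fin m) (Fin n) ℝ)
    (M22 : Matrix (Fin m) (Fin m) ℝ) (M23 : Matrix (Fin m) (Fin l) ℝ)
    (M31 : Matrix (Fin l) (Fin n) ℝ) (M32 : Matrix (Fin l) (Fin m) ℝ)
    (M33 : Matrix (Fin l) (Fin l) ℝ) :
    blk3 M11 M12 M13 M21 M22 M23 M31 M32 M33 =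
      fromBlocks M11 (fromCols M12 M13) (fromRows M21 M31) (fromBlocks M22 M23 M32 M33) := by
  ext (i | i | i) (j | j | j) <;> rfl

lemma blk3_mul_s6
    (M11 : Matrix (Fin n) (Fin n) ℝ) (M12 : Matrix (Fin n) (Fin m) ℝ)
    (M13 : Matrix (Fin n) (Fin l) ℝ) (M21 : Matrix (Fin m) (Fin n) ℝ)
    (M22 : Matrix (Fin m) (Fin m) ℝ) (M23 : Matrix (Fin m) (Fin l) ℝ)
    (M31 : Matrix (Fin l) (Fin n) ℝ) (M32 : Matrix (Fin l) (Fin m) ℝ)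
    (M33 : Matrix (Fin l) (Fin l) ℝ)
    (N11 : Matrix (Fin n) (Fin n) ℝ) (N12 : Matrix (Fin n) (Fin m) ℝ)
    (N13 : Matrix (Fin n) (Fin l) ℝ) (N21 : Matrix (Fin m) (Fin n) ℝ)
    (N22 : Matrix (Fin m) (Fin m) ℝ) (N23 : Matrix (Fin m) (Fin l) ℝ)
    (N31 : Matrix (Fin l) (Fin n) ℝ) (N32 : Matrix (Fin l) (Fin m) ℝ)
    (N33 : Matrix (Fin l) (Fin l) ℝ) :
    blk3 M11 M12 M13 M21 M22 M23 M31 M32 M33 * blk3 N11 N12 N13 N21 N22 N23 N31 N32 N33 =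
      blk3 (M11 * N11 + M12 * N21 + M13 * N31) (M11 * N12 + M12 * N22 + M13 * N32)
        (M11 * N13 + M12 * N23 + M13 * N33) (M21 * N11 + M22 * N21 + M23 * N31)
        (M21 * N12 + M22 * N22 + M23 * N32) (M21 * N13 + M22 * N23 + M23 * N33)
        (M31 * N11 + M32 * N21 + M33 * N31) (M31 * N12 + M32 * N22 + M33 * N32)
        (M31 * N13 + M32 * N23 + M33 * N33) := by
  simp only [blk3_eq_fromBlocks, fromBlocks_multiply, fromCols_mul_fromRows, mul_fromCols,
    fromCols_mul_fromBlocks, fromRows_mul, fromBlocks_mul_fromRows, add_assoc]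
  ext (i | i | i) (j | j | j) <;> simp [fromBlocks, fromCols]

lemma det_blk3_upper (M11 : Matrix (Fin n) (Fin n) ℝ) (M12 : Matrix (Fin n) (Fin m) ℝ)
    (M13 : Matrix (Fin n) (Fin l) ℝ) (M22 : Matrix (Fin m) (Fin m) ℝ)
    (M23 : Matrix (Fin m) (Fin l) ℝ) (M33 : Matrix (Fin l) (Fin l) ℝ) :
    (blk3 M11 M12 M13 0 M22 M23 0 0 M33).det = M11.det * M22.det * M33.det := by
  rw [blk3_eq_fromBlocks, fromRows_zero, det_fromBlocks_zero₂₁, det_fromBlocks_zero₂₁, mul_assoc]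

lemma det_blk3_lower (M11 : Matrix (Fin n) (Fin n) ℝ) (M21 : Matrix (Fin m) (Fin n) ℝ)
    (M22 : Matrix (Fin m) (Fin m) ℝ) (M31 : Matrix (Fin l) (Fin n) ℝ)
    (M32 : Matrix (Fin l) (Fin m) ℝ) (M33 : Matrix (Fin l) (Fin l) ℝ) :
    (blk3 M11 0 0 M21 M22 0 M31 M32 M33).det = M11.det * M22.det * M33.det := by
  rw [blk3_eq_fromBlocks, fromCols_zero, det_fromBlocks_zero₁₂, det_fromBlocks_zero₁₂, mul_assoc]

lemma charpoly_blk3_upper (M11 : Matrix (Fin n) (Fin n) ℝ) (M12 : Matrix (Fin n) (Fin m) ℝ)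
    (M13 : Matrix (Fin n) (Fin l) ℝ) (M22 : Matrix (Fin m) (Fin m) ℝ)
    (M23 : Matrix (Fin m) (Fin l) ℝ) (M33 : Matrix (Fin l) (Fin l) ℝ) :
    (blk3 M11 M12 M13 0 M22 M23 0 0 M33).charpoly =
      M11.charpoly * M22.charpoly * M33.charpoly := by
  rw [blk3_eq_fromBlocks, fromRows_zero, charpoly_fromBlocks_zero₂₁, charpoly_fromBlocks_zero₂₁,
    mul_assoc]

lemma charpoly_blk3_lower (M11 : Matrix (Fin n) (Fin n) ℝ) (M21 : Matrix (Fin m) (Fin n) ℝ)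
    (M22 : Matrix (Fin m) (Fin m) ℝ) (M31 : Matrix (Fin l) (Fin n) ℝ)
    (M32 : Matrix (Fin l) (Fin m) ℝ) (M33 : Matrix (Fin l) (Fin l) ℝ) :
    (blk3 M11 0 0 M21 M22 0 M31 M32 M33).charpoly =
      M11.charpoly * M22.charpoly * M33.charpoly := by
  rw [blk3_eq_fromBlocks, fromCols_zero, charpoly_fromBlocks_zero₁₂, charpoly_fromBlocks_zero₁₂,
    mul_assoc]

open Polynomial in
lemma charpoly_blk3_lower_one_one_neg_one (M21 : Matrix (Fin m) (Fin n) ℝ)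
    (M31 : Matrix (Fin l) (Fin n) ℝ) (M32 : Matrix (Fin l) (Fin m) ℝ) :
    (blk3 1 0 0 M21 1 0 M31 M32 (-1)).charpoly = (X - 1) ^ (n + m) * (X + 1) ^ l := by
  rw [charpoly_blk3_lower, charpoly_one, charpoly_one, charpoly_neg_one, ← pow_add]
  simp only [Fintype.card_fin]

open Polynomial in
lemma charpoly_blk3_upper_one_one_neg_one (M12 : Matrix (Fin n) (Fin m) ℝ)
    (M13 : Matrix (Fin n) (Fin l) ℝ) (M23 : Matrix (Fin m) (Fin l) ℝ) :
    (blk3 1 M12 M13 0 1 M23 0 0 (-1)).charpoly = (X - 1) ^ (n + m) * (X + 1) ^ l := by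
  rw [charpoly_blk3_upper, charpoly_one, charpoly_one, charpoly_neg_one, ← pow_add]
  simp only [Fintype.card_fin]

variable (A : Matrix (Fin n) (Fin n) ℝ) (B : Matrix (Fin m) (Fin n) ℝ)
  (C : Matrix (Fin l) (Fin m) ℝ) {S : Matrix (Fin m) (Fin m) ℝ}

lemma blk3_saddle_eq_lower_mul_Q₃ (hA : IsUnit A.det) (hS : IsUnit S.det)
    (hSdef : S = B * A⁻¹ * Bᵀ) :
    blk3 A Bᵀ 0 B 0 Cᵀ 0 C 0 =
      blk3 1 0 0 (B * A⁻¹) 1 0 0 (-(C * S⁻¹)) (-1) *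
        blk3 A Bᵀ 0 0 (-S) Cᵀ 0 0 (-(C * S⁻¹ * Cᵀ)) := by
  rw [blk3_mul_s6]
  congr 1 <;>
    simp [← hSdef, nonsing_inv_mul_cancel_right (h := hA), nonsing_inv_mul_cancel_right (h := hS)]

lemma blk3_saddle_eq_Q₄_mul_upper (hA : IsUnit A.det) (hS : IsUnit S.det)
    (hSdef : S = B * A⁻¹ * Bᵀ) :
    blk3 A Bᵀ 0 B 0 Cᵀ 0 C 0 =
      blk3 A Bᵀ 0 B 0 0 0 C (-(C * S⁻¹ * Cᵀ)) *
        blk3 1 0 (A⁻¹ * Bᵀ * S⁻¹ * Cᵀ) 0 1 (-(S⁻¹ * Cᵀ)) 0 0 (-1) := by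
  rw [blk3_mul_s6]
  congr 1 <;> simp [← Matrix.mul_assoc, ← hSdef, mul_nonsing_inv _ hA, mul_nonsing_inv _ hS]

end Blocks

theorem stmt6 {n m l : ℕ} (A : Matrix (Fin n) (Fin n) ℝ) (B : Matrix (Fin m) (Fin n) ℝ)
    (C : Matrix (Fin l) (Fin m) ℝ) (hA : A.PosDef) (hB : B.rank = m) (hC : C.rank = l)
    (S : Matrix (Fin m) (Fin m) ℝ) (hS : S = B * A⁻¹ * Bᵀ)
    (X : Matrix (Fin l) (Fin l) ℝ) (hX : X = C * S⁻¹ * Cᵀ)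
    (𝒜 Q₃ Q₄ : Matrix (Fin n ⊕ (Fin m ⊕ Fin l)) (Fin n ⊕ (Fin m ⊕ Fin l)) ℝ)
    (h𝒜 : 𝒜 = blk3 A Bᵀ 0 B 0 Cᵀ 0 C 0)
    (hQ₃ : Q₃ = blk3 A Bᵀ 0 0 (-S) Cᵀ 0 0 (-X))
    (hQ₄ : Q₄ = blk3 A Bᵀ 0 B 0 0 0 C (-X)) :
    𝒜 * Q₃⁻¹ = blk3 1 0 0 (B * A⁻¹) 1 0 0 (-(C * S⁻¹)) (-1) ∧
    Q₄⁻¹ * 𝒜 = blk3 1 0 (A⁻¹ * Bᵀ * S⁻¹ * Cᵀ) 0 1 (-(S⁻¹ * Cᵀ)) 0 0 (-1) ∧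
    (∀ μ ∈ spectrum ℂ ((𝒜 * Q₃⁻¹).map Complex.ofReal), μ = 1 ∨ μ = -1) ∧
    (∀ μ ∈ spectrum ℂ ((Q₄⁻¹ * 𝒜).map Complex.ofReal), μ = 1 ∨ μ = -1) := by
  have hSpd : S.PosDef := hS ▸ hA.inv.mul_mul_transpose_of_rank_eq_card_s6 (by simpa using hB)
  have hXpd : X.PosDef := hX ▸ hSpd.inv.mul_mul_transpose_of_rank_eq_card_s6 (by simpa using hC)
  have hAdet : IsUnit A.det := (isUnit_iff_isUnit_det A).mp hA.isUnit
  have hSdet : IsUnit S.det := (isUnit_iff_isUnit_det S).mp hSpd.isUnit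
  have hL : 𝒜 = blk3 1 0 0 (B * A⁻¹) 1 0 0 (-(C * S⁻¹)) (-1) * Q₃ := by
    rw [h𝒜, hQ₃, hX, blk3_saddle_eq_lower_mul_Q₃ A B C hAdet hSdet hS]
  have hU : 𝒜 = Q₄ * blk3 1 0 (A⁻¹ * Bᵀ * S⁻¹ * Cᵀ) 0 1 (-(S⁻¹ * Cᵀ)) 0 0 (-1) := by
    rw [h𝒜, hQ₄, hX, blk3_saddle_eq_Q₄_mul_upper A B C hAdet hSdet hS]
  have hQ₃det : IsUnit Q₃.det := by
    rw [hQ₃, det_blk3_upper]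
    exact (hAdet.mul ((isUnit_iff_isUnit_det _).mp hSpd.isUnit.neg)).mul
      ((isUnit_iff_isUnit_det _).mp hXpd.isUnit.neg)
  have h𝒜det : IsUnit 𝒜.det := by
    rw [hL, det_mul, det_blk3_lower]
    simpa [det_neg] using hQ₃det
  have hQ₄det : IsUnit Q₄.det := isUnit_of_mul_isUnit_left (by rwa [← det_mul, ← hU])
  have h₃ : 𝒜 * Q₃⁻¹ = blk3 1 0 0 (B * A⁻¹) 1 0 0 (-(C * S⁻¹)) (-1) := by
    rw [hL, mul_nonsing_inv_cancel_right _ _ hQ₃det]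
  have h₄ : Q₄⁻¹ * 𝒜 = blk3 1 0 (A⁻¹ * Bᵀ * S⁻¹ * Cᵀ) 0 1 (-(S⁻¹ * Cᵀ)) 0 0 (-1) := by
    rw [hU, nonsing_inv_mul_cancel_left _ _ hQ₄det]
  refine ⟨h₃, h₄, fun μ hμ => ?_, fun μ hμ => ?_⟩
  · rw [h₃] at hμ
    exact eq_one_or_eq_neg_one_of_mem_spectrum_map Complex.ofRealHom
      (charpoly_blk3_lower_one_one_neg_one _ _ _) hμ
  · rw [h₄] at hμ
    exact eq_one_or_eq_neg_one_of_mem_spectrum_map Complex.ofRealHom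
      (charpoly_blk3_upper_one_one_neg_one _ _ _) hμ
end
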